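/- Let f(x) = x(1-x). For ρ₋, ρ, ρ₊ ∈ [0,1], h > 0, τ > 0 with τ ≤ h, the Lax–Friedrichs update satisfies h·ρ + τ·(F₋ - F₊) ≤ h, where F₋, F₊ are as in the scheme with α = ν = 1. -/

import Mathlib

/-! The Lax–Friedrichs update equals `(h - τ) ρ + τ (ρ₋ (2 - ρ₋) + ρ₊²) / 2`, which is
nonnegative under the CFL condition `τ ≤ h`.
The flux `f(x) = x (1 - x)` is invariant under `x ↦ 1 - x`, and this symmetry turns `h` minus
the update of `(ρ₋, ρ, ρ₊)` into the update of the reflected and mirrored stencil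
`(1 - ρ₊, 1 - ρ, 1 - ρ₋)`, so the upper bound is the nonnegativity estimate again. -/

namespace LaxFriedrichs

noncomputable def flux (x : ℝ) : ℝ := x * (1 - x)

/-- The Lax–Friedrichs numerical flux with `α = ν = 1`. -/
noncomputable def numFlux (a b : ℝ) : ℝ := (flux a + flux b) / 2 - (b - a) / 2

noncomputable def update (h τ ρm ρ ρp : ℝ) : ℝ := h * ρ + τ * (numFlux ρm ρ - numFlux ρ ρp)

theorem update_eq (h τ ρm ρ ρp : ℝ) :
    update h τ ρm ρ ρp = (h - τ) * ρ + τ * (ρm * (2 - ρm) + ρp ^ 2) / 2 := by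
  simp only [update, numFlux, flux]
  ring

theorem update_nonneg {h τ ρm ρ : ℝ} (ρp : ℝ) (hτ : 0 ≤ τ) (hcfl : τ ≤ h) (hρ : 0 ≤ ρ)
    (hρm : ρm ∈ Set.Icc (0 : ℝ) 2) : 0 ≤ update h τ ρm ρ ρp := by
  have hm : 0 ≤ ρm * (2 - ρm) := mul_nonneg hρm.1 (sub_nonneg.2 hρm.2)
  rw [update_eq]
  exact add_nonneg (mul_nonneg (sub_nonneg.2 hcfl) hρ)
    (div_nonneg (mul_nonneg hτ (add_nonneg hm (sq_nonneg ρp))) zero_le_two)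

theorem numFlux_one_sub (a b : ℝ) : numFlux (1 - a) (1 - b) = numFlux b a := by
  simp only [numFlux, flux]
  ring

theorem sub_update (h τ ρm ρ ρp : ℝ) :
    h - update h τ ρm ρ ρp = update h τ (1 - ρp) (1 - ρ) (1 - ρm) := by
  simp only [update, numFlux_one_sub]
  ring

theorem update_le {h τ ρ ρp : ℝ} (ρm : ℝ) (hτ : 0 ≤ τ) (hcfl : τ ≤ h) (hρ : ρ ≤ 1)
    (hρp : ρp ∈ Set.Icc (-1 : ℝ) 1) : update h τ ρm ρ ρp ≤ h := by
  have hσp : 1 - ρp ∈ Set.Icc (0 : ℝ) 2 := ⟨by linarith [hρp.2], by linarith [hρp.1]⟩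
  have hreflected := update_nonneg (1 - ρm) hτ hcfl (sub_nonneg.2 hρ) hσp
  linarith [sub_update h τ ρm ρ ρp, hreflected]

end LaxFriedrichs

theorem lax_friedrichs_upper_bound_general (h τ ρm ρ ρp : ℝ)
    (hτ : 0 < τ) (hcfl : τ ≤ h)
    (hρ : ρ ∈ Set.Icc (0 : ℝ) 1)
    (hρp : ρp ∈ Set.Icc (0 : ℝ) 1) :
    h * ρ + τ * (((ρm * (1 - ρm) + ρ * (1 - ρ)) / 2 - (ρ - ρm) / 2) -
      ((ρ * (1 - ρ) + ρp * (1 - ρp)) / 2 - (ρp - ρ) / 2)) ≤ h :=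
  LaxFriedrichs.update_le ρm hτ.le hcfl hρ.2 ⟨by linarith [hρp.1], hρp.2⟩

theorem lax_friedrichs_upper_bound (h τ ρm ρ ρp : ℝ)
    (hh : 0 < h) (hτ : 0 < τ) (hcfl : τ ≤ h)
    (hρm : ρm ∈ Set.Icc (0 : ℝ) 1) (hρ : ρ ∈ Set.Icc (0 : ℝ) 1)
    (hρp : ρp ∈ Set.Icc (0 : ℝ) 1) :
    h * ρ + τ * (((ρm * (1 - ρm) + ρ * (1 - ρ)) / 2 - (ρ - ρm) / 2) -
      ((ρ * (1 - ρ) + ρp * (1 - ρp)) / 2 - (ρp - ρ) / 2)) ≤ h :=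
  lax_friedrichs_upper_bound_general h τ ρm ρ ρp hτ hcfl hρ hρp
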